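/- Let k ∈ ℕ, let S_1, …, S_m (m ≥ 1) be binary strings of length ℓ ≥ 1, and let T' = γ(S_1)·γ(S_1)·γ(S_2)⋯γ(S_m)·1^{2k+4}·γ(S_m)·1^{2k+4}. If S is a binary string of length ℓ with Ham(S, S_i) ≤ k for all i = 1, …, m, then the string C = 1^{2k+4}·φ(S)·1^{2k+4}, of length c = |γ(S_1)| + 2k+4, is a k-approximate cover of T' under the Hamming distance (and hence also a k-approximate seed of T'). -/

import Mathlib

/-- Hamming distance between two (equal-length) strings:
the number of positions where they differ. -/
def ham : List Bool → List Bool → ℕ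
  | x :: U, y :: V => (if x = y then 0 else 1) + ham U V
  | _, _ => 0

/-- The morphism `φ`: `φ(0) = 0^{2k+4} 1010 0^{2k+4}` and `φ(1) = 0^{2k+4} 1011 0^{2k+4}`,
with `0 ↦ false`, `1 ↦ true`. -/
def phi (k : ℕ) (S : List Bool) : List Bool :=
  S.flatMap fun x =>
    List.replicate (2 * k + 4) false ++ [true, false, true, x] ++
      List.replicate (2 * k + 4) false

/-- `γ(S) = 1^{2k+4} · φ(S)`. -/
def gamma (k : ℕ) (S : List Bool) : List Bool :=
  List.replicate (2 * k + 4) true ++ phi k S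

/-- `C` is a `k`-approximate cover of `T` under the Hamming distance: `|C| < |T|` and every
position `t` of `T` is covered by a `k`-approximate occurrence of `C` in `T`. -/
def IsApproxCover (k : ℕ) (C T : List Bool) : Prop :=
  C.length < T.length ∧
    ∀ t < T.length, ∃ i, i + C.length ≤ T.length ∧
      ham C ((T.drop i).take C.length) ≤ k ∧ i ≤ t ∧ t < i + C.length

/-- `C` is a `k`-approximate seed of `T`: `2|C| ≤ |T|` and `C` is a `k`-approximate cover of
some superstring of `T` (a string having `T` as a factor). -/
def IsApproxSeed (k : ℕ) (C T : List Bool) : Prop :=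
  2 * C.length ≤ T.length ∧ ∃ T' : List Bool, T <:+: T' ∧ IsApproxCover k C T'

/-! Every block `γ(X)` of `T'` that is followed by `1^{2k+4}` (the start of the next block or a
separator) spells `1^{2k+4} φ(X) 1^{2k+4}`, which is at Hamming distance `Ham(S, X) ≤ k` from `C`
because `φ` preserves Hamming distance. Occurrences of `C` at the starts of consecutive blocks
overlap, since `C` is longer than a block, and the trailing `γ(S_m) 1^{2k+4}` is itself an
occurrence ending at the end of `T'`. Finally `|T'| ≥ 2|C|`, so `C` is also a seed. -/

def IsApproxOccAt (k : ℕ) (C T : List Bool) (i : ℕ) : Prop :=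
  i + C.length ≤ T.length ∧ ham C ((T.drop i).take C.length) ≤ k

def IsCoveredAt (k : ℕ) (C T : List Bool) (t : ℕ) : Prop :=
  ∃ i, IsApproxOccAt k C T i ∧ i ≤ t ∧ t < i + C.length

theorem isApproxCover_iff {k : ℕ} {C T : List Bool} :
    IsApproxCover k C T ↔ C.length < T.length ∧ ∀ t < T.length, IsCoveredAt k C T t := by
  simp only [IsApproxCover, IsCoveredAt, IsApproxOccAt, and_assoc]

theorem ham_self : ∀ U : List Bool, ham U U = 0
  | [] => rfl
  | x :: U => by simp [ham, ham_self U]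

theorem ham_append : ∀ {U V : List Bool} (A B : List Bool), U.length = V.length →
    ham (U ++ A) (V ++ B) = ham U V + ham A B
  | [], [], _, _, _ => by simp [ham]
  | _ :: _, _ :: _, A, B, h => by
    simp only [List.cons_append, ham, ham_append A B (Nat.succ.inj h), add_assoc]

section Occurrences

variable {k : ℕ} {C : List Bool}

theorem isApproxOccAt_zero {W : List Bool} (Q : List Bool) (hW : W.length = C.length)
    (h : ham C W ≤ k) : IsApproxOccAt k C (W ++ Q) 0 :=
  ⟨by simp [hW], by rwa [List.drop_zero, List.take_left' hW]⟩

theorem IsApproxOccAt.append_left {T : List Bool} {i : ℕ} (P : List Bool)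
    (h : IsApproxOccAt k C T i) : IsApproxOccAt k C (P ++ T) (P.length + i) :=
  ⟨by simp only [List.length_append]; have := h.1; omega,
    by rw [List.drop_length_add_append]; exact h.2⟩

theorem IsApproxOccAt.append_right {T : List Bool} {i : ℕ} (Q : List Bool)
    (h : IsApproxOccAt k C T i) : IsApproxOccAt k C (T ++ Q) i := by
  refine ⟨by simp only [List.length_append]; have := h.1; omega, ?_⟩
  rw [List.drop_append_of_le_length (by have := h.1; omega),
    List.take_append_of_le_length (by have := h.1; simp only [List.length_drop]; omega)]
  exact h.2

theorem IsCoveredAt.append_left {T : List Bool} {t : ℕ} (P : List Bool)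
    (h : IsCoveredAt k C T t) : IsCoveredAt k C (P ++ T) (P.length + t) := by
  obtain ⟨i, hi, hit, hti⟩ := h
  exact ⟨P.length + i, hi.append_left P, by omega, by omega⟩

theorem IsCoveredAt.append_right {T : List Bool} {t : ℕ} (Q : List Bool)
    (h : IsCoveredAt k C T t) : IsCoveredAt k C (T ++ Q) t := by
  obtain ⟨i, hi, hit, hti⟩ := h
  exact ⟨i, hi.append_right Q, hit, hti⟩

theorem isCoveredAt_append {A B : List Bool}
    (hA : ∀ t < A.length, IsCoveredAt k C (A ++ B) t)
    (hB : ∀ t < B.length, IsCoveredAt k C B t) :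
    ∀ t < (A ++ B).length, IsCoveredAt k C (A ++ B) t := by
  intro t ht
  rcases lt_or_ge t A.length with h | h
  · exact hA t h
  · obtain ⟨s, rfl⟩ := Nat.exists_eq_add_of_le h
    exact (hB s (by simpa using ht)).append_left A

end Occurrences

section Morphism

variable {k : ℕ}

def coverWord (k : ℕ) (S : List Bool) : List Bool :=
  List.replicate (2 * k + 4) true ++ phi k S ++ List.replicate (2 * k + 4) true

theorem phi_cons (k : ℕ) (x : Bool) (X : List Bool) :
    phi k (x :: X) = (List.replicate (2 * k + 4) false ++ [true, false, true, x] ++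
      List.replicate (2 * k + 4) false) ++ phi k X :=
  List.flatMap_cons

theorem length_phi (k : ℕ) (X : List Bool) : (phi k X).length = X.length * (4 * k + 12) := by
  induction X with
  | nil => simp [phi]
  | cons x X ih => simp [phi_cons, ih]; ring

theorem ham_phi : ∀ {S X : List Bool}, S.length = X.length → ham (phi k S) (phi k X) = ham S X
  | [], [], _ => rfl
  | x :: S, y :: X, h => by
    rw [phi_cons, phi_cons, ham_append _ _ (by simp), ham_phi (Nat.succ.inj h),
      ham_append _ _ (by simp), ham_append _ _ rfl, ham_self]
    simp [ham]

theorem ham_coverWord {S X : List Bool} (h : S.length = X.length) :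
    ham (coverWord k S) (coverWord k X) = ham S X := by
  have hphi : (phi k S).length = (phi k X).length := by rw [length_phi, length_phi, h]
  rw [coverWord, coverWord, ham_append _ _ (by simp [hphi]), ham_append _ _ rfl, ham_self,
    ham_phi h, zero_add, add_zero]

theorem length_gamma_eq {S X : List Bool} (h : X.length = S.length) :
    (gamma k X).length = (gamma k S).length := by
  simp [gamma, length_phi, h]

theorem length_coverWord (S : List Bool) :
    (coverWord k S).length = (gamma k S).length + (2 * k + 4) := by
  simp only [coverWord, gamma, List.length_append, List.length_replicate]

theorem gamma_append_replicate (X R : List Bool) :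
    gamma k X ++ (List.replicate (2 * k + 4) true ++ R) = coverWord k X ++ R := by
  simp [gamma, coverWord]

theorem length_flatten_map_gamma {S : List Bool} :
    ∀ {L : List (List Bool)}, (∀ X ∈ L, X.length = S.length) →
      ((L.map (gamma k)).flatten).length = L.length * (gamma k S).length
  | [], _ => by simp
  | X :: L, h => by
    simp only [List.map_cons, List.flatten_cons, List.length_append, List.length_cons,
      length_gamma_eq (h X List.mem_cons_self),
      length_flatten_map_gamma fun Y hY => h Y (List.mem_cons_of_mem _ hY)]
    ring

theorem replicate_prefix_flatten_map_gamma_append {Q : List Bool}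
    (hQ : List.replicate (2 * k + 4) true <+: Q) :
    ∀ L : List (List Bool), List.replicate (2 * k + 4) true <+: (L.map (gamma k)).flatten ++ Q
  | [] => hQ
  | X :: L => by
    simp only [List.map_cons, List.flatten_cons, gamma, List.append_assoc]
    exact List.prefix_append _ _

theorem isApproxOccAt_gamma {S X : List Bool} (R : List Bool) (hX : X.length = S.length)
    (h : ham S X ≤ k) :
    IsApproxOccAt k (coverWord k S)
      (gamma k X ++ (List.replicate (2 * k + 4) true ++ R)) 0 := by
  rw [gamma_append_replicate]
  refine isApproxOccAt_zero R ?_ (by rwa [ham_coverWord hX.symm])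
  rw [length_coverWord, length_coverWord, length_gamma_eq hX]

theorem isCoveredAt_flatten_map_gamma {S Q : List Bool}
    (hQ : List.replicate (2 * k + 4) true <+: Q) :
    ∀ {L : List (List Bool)}, L ≠ [] →
      (∀ X ∈ L, X.length = S.length ∧ ham S X ≤ k) →
      ∀ t < L.length * (gamma k S).length + (2 * k + 4),
        IsCoveredAt k (coverWord k S) ((L.map (gamma k)).flatten ++ Q) t
  | [], h, _ => (h rfl).elim
  | X :: L, _, hmem => by
    intro t ht
    obtain ⟨hXlen, hXham⟩ := hmem X List.mem_cons_self
    obtain ⟨R, hR⟩ := replicate_prefix_flatten_map_gamma_append hQ L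
    have hb := length_gamma_eq (k := k) hXlen
    rw [List.map_cons, List.flatten_cons, List.append_assoc]
    rcases lt_or_ge t (coverWord k S).length with hlt | hge
    · rw [← hR]
      exact ⟨0, isApproxOccAt_gamma R hXlen hXham, Nat.zero_le _, by omega⟩
    · have hL : L ≠ [] := by
        rintro rfl
        simp only [List.length_singleton, one_mul, length_coverWord] at ht hge
        omega
      obtain ⟨s, rfl⟩ : ∃ s, t = (gamma k X).length + s :=
        ⟨t - (gamma k X).length, by rw [length_coverWord] at hge; omega⟩
      refine IsCoveredAt.append_left _ (isCoveredAt_flatten_map_gamma hQ hL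
        (fun Y hY => hmem Y (List.mem_cons_of_mem _ hY)) s ?_)
      simp only [List.length_cons, add_mul, one_mul] at ht
      omega

theorem length_flatten_map_gamma_append_gamma {S X : List Bool} {L : List (List Bool)}
    (hL : ∀ Y ∈ L, Y.length = S.length) (hX : X.length = S.length) :
    ((L.map (gamma k)).flatten ++ List.replicate (2 * k + 4) true ++ gamma k X ++
      List.replicate (2 * k + 4) true).length =
      (L.length + 1) * (gamma k S).length + 2 * (2 * k + 4) := by
  simp only [List.length_append, length_flatten_map_gamma hL, length_gamma_eq hX,
    List.length_replicate]
  ring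

theorem isCoveredAt_flatten_map_gamma_append_gamma {S X : List Bool} {L : List (List Bool)}
    (hL : L ≠ []) (hgood : ∀ Y ∈ L, Y.length = S.length ∧ ham S Y ≤ k)
    (hX : X.length = S.length) (hSX : ham S X ≤ k) {T : List Bool}
    (hT : T = (L.map (gamma k)).flatten ++ List.replicate (2 * k + 4) true ++ gamma k X ++
      List.replicate (2 * k + 4) true) :
    ∀ t < T.length, IsCoveredAt k (coverWord k S) T t := by
  have hT' : T = ((L.map (gamma k)).flatten ++ List.replicate (2 * k + 4) true) ++
      (([X].map (gamma k)).flatten ++ List.replicate (2 * k + 4) true) := by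
    simp [hT]
  rw [hT']
  refine isCoveredAt_append (fun t ht => ?_) (fun t ht => ?_)
  · rw [List.append_assoc]
    refine isCoveredAt_flatten_map_gamma (List.prefix_append _ _) hL hgood t ?_
    simpa only [List.length_append, length_flatten_map_gamma fun Y hY => (hgood Y hY).1,
      List.length_replicate] using ht
  · refine isCoveredAt_flatten_map_gamma (List.prefix_refl _) (List.cons_ne_nil _ [])
      (List.forall_mem_singleton.2 ⟨hX, hSX⟩) t ?_
    simpa [length_gamma_eq hX] using ht

end Morphism

theorem stmt9_general (k ℓ : ℕ)
    (Ss : List (List Bool))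
    (hlen : ∀ Si ∈ Ss, Si.length = ℓ)
    (hne : Ss ≠ [])
    (T' : List Bool)
    (hT' : T' = gamma k (Ss.head hne) ++ (Ss.map (gamma k)).flatten ++
      List.replicate (2 * k + 4) true ++ gamma k (Ss.getLast hne) ++
      List.replicate (2 * k + 4) true)
    (S : List Bool) (hS : S.length = ℓ)
    (hcons : ∀ Si ∈ Ss, ham S Si ≤ k)
    (C : List Bool)
    (hC : C = List.replicate (2 * k + 4) true ++ phi k S ++ List.replicate (2 * k + 4) true) :
    IsApproxCover k C T' ∧ IsApproxSeed k C T' := by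
  obtain rfl : C = coverWord k S := hC
  have hgood : ∀ X ∈ Ss, X.length = S.length ∧ ham S X ≤ k :=
    fun X hX => ⟨(hlen X hX).trans hS.symm, hcons X hX⟩
  have hgoodCons : ∀ X ∈ Ss.head hne :: Ss, X.length = S.length ∧ ham S X ≤ k :=
    List.forall_mem_cons.2 ⟨hgood _ (List.head_mem hne), hgood⟩
  obtain ⟨hlast, hlastHam⟩ := hgood _ (List.getLast_mem hne)
  have hsplit : T' = ((Ss.head hne :: Ss).map (gamma k)).flatten ++
      List.replicate (2 * k + 4) true ++ gamma k (Ss.getLast hne) ++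
      List.replicate (2 * k + 4) true := by
    simp [hT']
  have hlenT : T'.length = (Ss.length + 2) * (gamma k S).length + 2 * (2 * k + 4) := by
    rw [hsplit, length_flatten_map_gamma_append_gamma (fun X hX => (hgoodCons X hX).1) hlast,
      List.length_cons]
  have hcover : IsApproxCover k (coverWord k S) T' := by
    refine isApproxCover_iff.2 ⟨?_, isCoveredAt_flatten_map_gamma_append_gamma
      (List.cons_ne_nil _ _) hgoodCons hlast hlastHam hsplit⟩
    rw [length_coverWord, hlenT, add_mul]
    omega
  refine ⟨hcover, ?_, T', List.infix_refl _, hcover⟩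
  rw [length_coverWord, hlenT, add_mul]
  omega

theorem stmt9 (k ℓ m : ℕ) (hm : 1 ≤ m) (hℓ : 1 ≤ ℓ)
    (Ss : List (List Bool)) (hSs : Ss.length = m)
    (hlen : ∀ Si ∈ Ss, Si.length = ℓ)
    (hne : Ss ≠ [])
    (T' : List Bool)
    (hT' : T' = gamma k (Ss.head hne) ++ (Ss.map (gamma k)).flatten ++
      List.replicate (2 * k + 4) true ++ gamma k (Ss.getLast hne) ++
      List.replicate (2 * k + 4) true)
    (S : List Bool) (hS : S.length = ℓ)
    (hcons : ∀ Si ∈ Ss, ham S Si ≤ k)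
    (C : List Bool)
    (hC : C = List.replicate (2 * k + 4) true ++ phi k S ++ List.replicate (2 * k + 4) true) :
    IsApproxCover k C T' ∧ IsApproxSeed k C T' :=
  stmt9_general k ℓ Ss hlen hne T' hT' S hS hcons C hC
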